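/- arXiv:2503.15732 — 2 statements merged into one kernel-verified Lean document; each statement's English description precedes it below -/
import Mathlib

section
/- Fix real parameters ρ > 0 and 0 < a < 1, a < b, and let f(u) = (ρ/u)·(1−bu)/(1−au) and deck(u) = ((a−b)/(ab))·u/(u − 1/b) + 1/a. Then for every u ∈ ℂ \ {0, 1/a, 1/b}: (i) deck(deck(u)) = u (deck is an involution); (ii) deck(u) = u if and only if a·b·u² − 2a·u + 1 = 0, i.e. the fixed points of deck are exactly the critical points of f; and (iii) u · deck(u) · f(u) = ρ/a. -/
/-- the deck transformation of `f(u) = (ρ/u)(1−bu)/(1−au)` is an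
involution, its fixed points are the critical points of `f`, and
`u · deck(u) · f(u) = ρ/a`. -/
theorem deck_involution_fixedPoints_product
    (ρ a b : ℝ) (hρ : 0 < ρ) (ha0 : 0 < a) (ha1 : a < 1) (hab : a < b)
    (f deck : ℂ → ℂ)
    (hf : f = fun u : ℂ => ((ρ : ℂ) / u) * ((1 - (b : ℂ) * u) / (1 - (a : ℂ) * u)))
    (hdeck : deck = fun u : ℂ =>
      (((a : ℂ) - (b : ℂ)) / ((a : ℂ) * (b : ℂ))) * u / (u - 1 / (b : ℂ)) + 1 / (a : ℂ))
    (u : ℂ)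
    (hu : u ≠ 0 ∧ u ≠ 1 / (a : ℂ) ∧ u ≠ 1 / (b : ℂ)) :
    deck (deck u) = u ∧
    (deck u = u ↔ (a : ℂ) * (b : ℂ) * u ^ 2 - 2 * (a : ℂ) * u + 1 = 0) ∧
    u * deck u * f u = (ρ : ℂ) / (a : ℂ) := by
  obtain ⟨hu0, hua, hub⟩ := hu
  have hA : (a : ℂ) ≠ 0 := Complex.ofReal_ne_zero.mpr (ne_of_gt ha0)
  have hB : (b : ℂ) ≠ 0 :=
    Complex.ofReal_ne_zero.mpr (ne_of_gt (lt_trans ha0 hab))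
  have hABne : (a : ℂ) - (b : ℂ) ≠ 0 := by
    intro h
    exact absurd (by exact_mod_cast sub_eq_zero.mp h : a = b) (ne_of_lt hab)
  have hBu : (b : ℂ) * u - 1 ≠ 0 := by
    intro h
    apply hub
    rw [eq_div_iff hB]
    linear_combination h
  have hAu : (a : ℂ) * u - 1 ≠ 0 := by
    intro h
    apply hua
    rw [eq_div_iff hA]
    linear_combination h
  -- closed form for deck
  have key : ∀ w : ℂ, (b : ℂ) * w - 1 ≠ 0 →
      deck w = ((a : ℂ) * w - 1) / ((a : ℂ) * ((b : ℂ) * w - 1)) := by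
    intro w hw
    have hw' : w - 1 / (b : ℂ) ≠ 0 := by
      intro h
      apply hw
      rw [sub_eq_zero] at h ⊢
      rw [h]
      field_simp
    have hwb : w - 1 / (b : ℂ) = ((b : ℂ) * w - 1) / (b : ℂ) := by
      field_simp
    rw [hdeck]
    simp only
    rw [hwb, div_div_eq_mul_div, eq_div_iff (mul_ne_zero hA hw)]
    field_simp
    ring
  have hdku := key u hBu
  -- nonvanishing for second application
  have hBv : (b : ℂ) * deck u - 1 ≠ 0 := by
    rw [hdku]
    intro h
    rw [sub_eq_zero] at h
    field_simp at h
    apply hABne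
    linear_combination h
  refine ⟨?_, ?_, ?_⟩
  · have hBv' : (b : ℂ) * (((a : ℂ) * u - 1) / ((a : ℂ) * ((b : ℂ) * u - 1))) - 1 ≠ 0 :=
      hdku ▸ hBv
    rw [key _ hBv, hdku, div_eq_iff (mul_ne_zero hA hBv')]
    field_simp
    have hBu' : u * (b : ℂ) - 1 ≠ 0 := by rwa [mul_comm]
    field_simp
    ring
  · rw [hdku]
    rw [div_eq_iff (mul_ne_zero hA hBu)]
    constructor
    · intro h
      linear_combination -h
    · intro h
      linear_combination -h
  · rw [hdku, hf]
    simp only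
    have h1au : 1 - (a : ℂ) * u ≠ 0 := by
      intro h; apply hAu; linear_combination -h
    field_simp
    have hBu' : u * (b : ℂ) - 1 ≠ 0 := by rwa [mul_comm]
    have h1au' : 1 - u * (a : ℂ) ≠ 0 := by rwa [mul_comm]
    rw [div_eq_iff (mul_ne_zero hBu' h1au')]
    ring
end

section
/- Fix real parameters ρ > 0 and 0 < a < 1, a < b with a·b ≠ 1. For real x > 0 define s(x) = √((x − ρ(2a−b))² + 4ρ²a(b−a)) (real square root), F₁(x) = (bρ + x − s(x))/(2ax), F₂(x) = (bρ + x + s(x))/(2ax), and the spherical Schwarz functions S₁(x) = f(1/F₁(x))/(1 + x·f(1/F₁(x))) and S₂(x) = f(1/F₂(x))/(1 + x·f(1/F₂(x))), where f(u) = (ρ/u)·(1−bu)/(1−au). Then: (i) lim_{x→∞} x·S₁(x) = bρ²/(a + bρ²); (ii) lim_{x→∞} x·S₂(x) = 1; and (iii) lim_{x→0⁺} x·S₂(x) = bρ²/(a + bρ²). In particular, if moreover Q₀, Q₁ > 0 satisfy bρ²/a = (1+Q₁)/Q₀, then the limits in (i) and (iii) equal (1+Q₁)/(1+Q₀+Q₁).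 -/
open Filter

private lemma frac_eq (a b F : ℝ) (hF : F ≠ 0) :
    (1 - b * (1 / F)) / (1 - a * (1 / F)) = (F - b) / (F - a) := by
  rcases eq_or_ne F a with rfl | h
  · rw [show (1 : ℝ) - F * (1/F) = 0 by field_simp; ring, show F - F = 0 by ring]
    simp
  · have h1 : 1 - a * (1/F) ≠ 0 := by
      rw [sub_ne_zero]
      intro hh
      apply h
      field_simp at hh
      exact hh
    have h2 : F - a ≠ 0 := sub_ne_zero.mpr h
    field_simp

private lemma tendsto_div_one_add {l : Filter ℝ} {t : ℝ → ℝ} {L : ℝ}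
    (h : Tendsto t l (nhds L)) (hL : 1 + L ≠ 0) :
    Tendsto (fun x => t x / (1 + t x)) l (nhds (L / (1 + L))) :=
  h.div (tendsto_const_nhds.add h) hL

private lemma tendsto_div_one_add_atTop {l : Filter ℝ} {t : ℝ → ℝ}
    (h : Tendsto t l atTop) :
    Tendsto (fun x => t x / (1 + t x)) l (nhds 1) := by
  have h1 : Tendsto (fun x => 1 + t x) l atTop := tendsto_atTop_add_const_left _ 1 h
  have h3 : Tendsto (fun x => (1 + t x)⁻¹) l (nhds 0) := h1.inv_tendsto_atTop
  have h2 : Tendsto (fun x => 1 - (1 + t x)⁻¹) l (nhds (1 - 0)) :=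
    tendsto_const_nhds.sub h3
  rw [sub_zero] at h2
  refine h2.congr' ?_
  filter_upwards [h1.eventually_ge_atTop 1] with x hx
  have hne : 1 + t x ≠ 0 := by linarith
  field_simp
  ring

private lemma tendsto_div_one_add_atBot {l : Filter ℝ} {t : ℝ → ℝ}
    (h : Tendsto t l atBot) :
    Tendsto (fun x => t x / (1 + t x)) l (nhds 1) := by
  have h1 : Tendsto (fun x => 1 + t x) l atBot := tendsto_atBot_add_const_left _ 1 h
  have h1' : Tendsto (fun x => -(1 + t x)) l atTop := tendsto_neg_atTop_iff.mpr h1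
  have h3 : Tendsto (fun x => (-(1 + t x))⁻¹) l (nhds 0) := h1'.inv_tendsto_atTop
  have h3' : Tendsto (fun x => (1 + t x)⁻¹) l (nhds 0) := by
    have h4 := h3.neg
    rw [neg_zero] at h4
    refine h4.congr fun x => ?_
    rw [← inv_neg, neg_neg]
  have h2 : Tendsto (fun x => 1 - (1 + t x)⁻¹) l (nhds (1 - 0)) :=
    tendsto_const_nhds.sub h3'
  rw [sub_zero] at h2
  refine h2.congr' ?_
  filter_upwards [h1.eventually_le_atBot (-1)] with x hx
  have hne : 1 + t x ≠ 0 := by linarith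
  field_simp
  ring


/-- asymptotic behaviour of the spherical Schwarz functions
`S₁, S₂` on the positive real axis: `x·S₁(x) → bρ²/(a+bρ²)` as `x → ∞`,
`x·S₂(x) → 1` as `x → ∞`, and `x·S₂(x) → bρ²/(a+bρ²)` as `x → 0⁺`; in terms of the
charges, these limits equal `(1+Q₁)/(1+Q₀+Q₁)`. -/
theorem spherical_schwarz_asymptotics
    (ρ a b : ℝ) (hρ : 0 < ρ) (ha0 : 0 < a) (ha1 : a < 1) (hab : a < b)
    (hab1 : a * b ≠ 1)
    (f s F₁ F₂ S₁ S₂ : ℝ → ℝ)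
    (hf : f = fun u : ℝ => (ρ / u) * ((1 - b * u) / (1 - a * u)))
    (hs : s = fun x : ℝ =>
      Real.sqrt ((x - ρ * (2 * a - b)) ^ 2 + 4 * ρ ^ 2 * a * (b - a)))
    (hF₁ : F₁ = fun x : ℝ => (b * ρ + x - s x) / (2 * a * x))
    (hF₂ : F₂ = fun x : ℝ => (b * ρ + x + s x) / (2 * a * x))
    (hS₁ : S₁ = fun x : ℝ => f (1 / F₁ x) / (1 + x * f (1 / F₁ x)))
    (hS₂ : S₂ = fun x : ℝ => f (1 / F₂ x) / (1 + x * f (1 / F₂ x))) :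
    Tendsto (fun x : ℝ => x * S₁ x) atTop (nhds (b * ρ ^ 2 / (a + b * ρ ^ 2))) ∧
    Tendsto (fun x : ℝ => x * S₂ x) atTop (nhds 1) ∧
    Tendsto (fun x : ℝ => x * S₂ x) (nhdsWithin 0 (Set.Ioi 0))
      (nhds (b * ρ ^ 2 / (a + b * ρ ^ 2))) ∧
    (∀ Q₀ Q₁ : ℝ, 0 < Q₀ → 0 < Q₁ → b * ρ ^ 2 / a = (1 + Q₁) / Q₀ →
      b * ρ ^ 2 / (a + b * ρ ^ 2) = (1 + Q₁) / (1 + Q₀ + Q₁)) := by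
  have hb : 0 < b := lt_trans ha0 hab
  set c : ℝ := ρ * (2 * a - b) with hc
  set d : ℝ := 4 * ρ ^ 2 * a * (b - a) with hd
  have hba : 0 < b - a := sub_pos.mpr hab
  have hd0 : 0 < d := by rw [hd]; positivity
  have harg : ∀ x : ℝ, 0 ≤ (x - c) ^ 2 + d := fun x => by positivity
  have hsq : ∀ x : ℝ, s x ^ 2 = (x - c) ^ 2 + d := fun x => by
    rw [hs]; exact Real.sq_sqrt (harg x)
  have hs0 : ∀ x : ℝ, 0 ≤ s x := fun x => by rw [hs]; exact Real.sqrt_nonneg _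
  have hbc : b * ρ + c = 2 * a * ρ := by rw [hc]; ring
  have hcd : c ^ 2 + d = (ρ * b) ^ 2 := by rw [hc, hd]; ring
  have h2a : (0:ℝ) < 2 * a := by linarith
  have hslt : ∀ x : ℝ, 0 < x → s x < b * ρ + x := by
    intro x hx
    have h1 : s x ^ 2 < (b * ρ + x) ^ 2 := by nlinarith [hsq x, mul_pos (mul_pos ha0 hρ) hx]
    exact lt_of_pow_lt_pow_left₀ 2 (by positivity) h1
  have hbr : 0 < b * ρ ^ 2 := by positivity
  have hbra : 0 < b * ρ ^ 2 / a := div_pos hbr ha0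
  have hL : (1:ℝ) + b * ρ ^ 2 / a ≠ 0 := by linarith
  have habr : (0:ℝ) < a + b * ρ ^ 2 := by linarith
  have e1 : (b * ρ ^ 2 / a) / (1 + b * ρ ^ 2 / a) = b * ρ ^ 2 / (a + b * ρ ^ 2) := by
    rw [div_eq_div_iff (by linarith) habr.ne']
    field_simp
  -- f in terms of F
  have hfF : ∀ F : ℝ, F ≠ 0 → f (1 / F) = ρ * F * ((F - b) / (F - a)) := by
    intro F hFne
    rw [hf]
    simp only
    rw [frac_eq a b F hFne, div_div_eq_mul_div, div_one]
  -- x - s x → c at atTop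
  have hdenom : Tendsto (fun x : ℝ => x - c + s x) atTop atTop := by
    apply tendsto_atTop_mono (fun x => ?_)
      (tendsto_atTop_add_const_right atTop (-c) tendsto_id)
    have := hs0 x
    simp only [id_eq]
    linarith
  have hxs : Tendsto (fun x : ℝ => x - s x) atTop (nhds c) := by
    have h2 : Tendsto (fun x : ℝ => c - d / (x - c + s x)) atTop (nhds (c - 0)) :=
      tendsto_const_nhds.sub (tendsto_const_nhds.div_atTop hdenom)
    rw [sub_zero] at h2
    refine h2.congr' ?_
    filter_upwards [hdenom.eventually_ge_atTop 1] with x hx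
    have hpos : x - c + s x ≠ 0 := by linarith
    have hkey : d / (x - c + s x) = c - (x - s x) := by
      rw [div_eq_iff hpos]
      linear_combination -hsq x
    rw [hkey]; ring
  -- xF₁ limit
  have hxF1 : Tendsto (fun x : ℝ => (b * ρ + (x - s x)) / (2 * a)) atTop (nhds ρ) := by
    have h : Tendsto (fun x : ℝ => (b * ρ + (x - s x)) / (2 * a)) atTop
        (nhds ((b * ρ + c) / (2 * a))) :=
      (tendsto_const_nhds.add hxs).div_const (2 * a)
    rwa [show (b * ρ + c) / (2 * a) = ρ by rw [hbc]; field_simp] at h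
  have hF1lim : Tendsto F₁ atTop (nhds 0) := by
    have h := hxF1.div_atTop tendsto_id
    refine h.congr fun x => ?_
    rw [hF₁]
    simp only [div_div, id_eq]
    ring_nf
  have hxF1' : Tendsto (fun x : ℝ => x * F₁ x) atTop (nhds ρ) := by
    refine hxF1.congr' ?_
    filter_upwards [eventually_gt_atTop 0] with x hx
    have hxne : x ≠ 0 := ne_of_gt hx
    rw [hF₁]
    field_simp
    ring
  have hF1pos : ∀ x : ℝ, 0 < x → 0 < F₁ x := by
    intro x hx
    rw [hF₁]
    have h1 := hslt x hx
    exact div_pos (by linarith) (mul_pos h2a hx)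
  have hratio1 : Tendsto (fun x : ℝ => (F₁ x - b) / (F₁ x - a)) atTop
      (nhds ((0 - b) / (0 - a))) :=
    (hF1lim.sub_const b).div (hF1lim.sub_const a) (sub_ne_zero.mpr ha0.ne)
  have ht1 : Tendsto (fun x : ℝ => x * f (1 / F₁ x)) atTop (nhds (b * ρ ^ 2 / a)) := by
    have h := (hxF1'.mul hratio1).const_mul ρ
    rw [show ρ * (ρ * ((0 - b) / (0 - a))) = b * ρ ^ 2 / a by
      rw [zero_sub, zero_sub, neg_div_neg_eq]; field_simp] at h
    refine h.congr' ?_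
    filter_upwards [eventually_gt_atTop 0] with x hx
    rw [hfF (F₁ x) (hF1pos x hx).ne']
    ring
  have c1 : Tendsto (fun x : ℝ => x * S₁ x) atTop (nhds (b * ρ ^ 2 / (a + b * ρ ^ 2))) := by
    have h := tendsto_div_one_add ht1 hL
    rw [e1] at h
    refine h.congr fun x => ?_
    rw [hS₁]
    simp only
    rw [mul_div_assoc]
  -- case (ii)
  have hxF2top : Tendsto (fun x : ℝ => (b * ρ + x + s x) / (2 * a)) atTop atTop := by
    apply tendsto_atTop_mono (fun x => ?_)
      ((tendsto_atTop_add_const_left atTop (b * ρ) tendsto_id).atTop_div_const h2a)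
    have h := hs0 x
    simp only [id_eq]
    rw [div_le_div_iff₀ h2a h2a]
    nlinarith [mul_nonneg h h2a.le]
  have hsdiv : Tendsto (fun x : ℝ => s x / x) atTop (nhds 1) := by
    have h1 : Tendsto (fun x : ℝ => 1 - (x - s x) / x) atTop (nhds (1 - 0)) :=
      tendsto_const_nhds.sub (hxs.div_atTop tendsto_id)
    rw [sub_zero] at h1
    refine h1.congr' ?_
    filter_upwards [eventually_gt_atTop 0] with x hx
    have hxne : x ≠ 0 := ne_of_gt hx
    field_simp
    ring
  have hF2lim : Tendsto F₂ atTop (nhds (1 / a)) := by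
    have h0 : Tendsto (fun x : ℝ => b * ρ / x) atTop (nhds 0) :=
      tendsto_const_nhds.div_atTop tendsto_id
    have h1 : Tendsto (fun x : ℝ => (b * ρ / x + 1 + s x / x) / (2 * a)) atTop
        (nhds ((0 + 1 + 1) / (2 * a))) :=
      ((h0.add tendsto_const_nhds).add hsdiv).div_const _
    rw [show ((0:ℝ) + 1 + 1) / (2 * a) = 1 / a by
      rw [div_eq_div_iff h2a.ne' ha0.ne']; ring] at h1
    refine h1.congr' ?_
    filter_upwards [eventually_gt_atTop 0] with x hx
    have hxne : x ≠ 0 := ne_of_gt hx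
    rw [hF₂]
    rw [div_eq_div_iff h2a.ne' (mul_pos h2a hx).ne']
    field_simp
  have hFa : (1:ℝ) / a - a ≠ 0 := by
    have h1 : a < 1 / a := by rw [lt_div_iff₀ ha0]; nlinarith
    intro h; rw [sub_eq_zero] at h; rw [h] at h1; exact lt_irrefl a h1
  have hFb : (1:ℝ) / a - b ≠ 0 := by
    intro h
    rw [sub_eq_zero] at h
    apply hab1
    field_simp at h
    linarith [h]
  have hratio2 : Tendsto (fun x : ℝ => ρ * ((F₂ x - b) / (F₂ x - a))) atTop
      (nhds (ρ * ((1 / a - b) / (1 / a - a)))) :=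
    ((hF2lim.sub_const b).div (hF2lim.sub_const a) hFa).const_mul ρ
  have hKne : ρ * ((1 / a - b) / (1 / a - a)) ≠ 0 :=
    mul_ne_zero hρ.ne' (div_ne_zero hFb hFa)
  have hF2pos : ∀ x : ℝ, 0 < x → 0 < F₂ x := by
    intro x hx
    rw [hF₂]
    exact div_pos (by nlinarith [hs0 x, mul_pos hb hρ]) (mul_pos h2a hx)
  have hxF2eq : ∀ x : ℝ, 0 < x → x * F₂ x = (b * ρ + x + s x) / (2 * a) := by
    intro x hx
    have hxne : x ≠ 0 := ne_of_gt hx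
    rw [hF₂]
    field_simp
  have ht2eq : (fun x : ℝ => x * f (1 / F₂ x)) =ᶠ[atTop]
      fun x => ((b * ρ + x + s x) / (2 * a)) * (ρ * ((F₂ x - b) / (F₂ x - a))) := by
    filter_upwards [eventually_gt_atTop 0] with x hx
    rw [hfF (F₂ x) (hF2pos x hx).ne', ← hxF2eq x hx]
    ring
  have c2 : Tendsto (fun x : ℝ => x * S₂ x) atTop (nhds 1) := by
    have hSeq : ∀ x : ℝ,
        x * f (1 / F₂ x) / (1 + x * f (1 / F₂ x)) = x * S₂ x := by
      intro x
      rw [hS₂]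
      simp only
      rw [mul_div_assoc]
    rcases hKne.lt_or_gt with hK | hK
    · have h := hxF2top.atTop_mul_neg hK hratio2
      have ht2 : Tendsto (fun x : ℝ => x * f (1 / F₂ x)) atTop atBot := h.congr' ht2eq.symm
      exact (tendsto_div_one_add_atBot ht2).congr hSeq
    · have h := hxF2top.atTop_mul_pos hK hratio2
      have ht2 : Tendsto (fun x : ℝ => x * f (1 / F₂ x)) atTop atTop := h.congr' ht2eq.symm
      exact (tendsto_div_one_add_atTop ht2).congr hSeq
  -- case (iii)
  have hscont : Tendsto s (nhdsWithin 0 (Set.Ioi 0)) (nhds (ρ * b)) := by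
    have hcont : Continuous s := by
      rw [hs]
      exact Real.continuous_sqrt.comp
        (((continuous_id.sub continuous_const).pow 2).add continuous_const)
    have h0 : s 0 = ρ * b := by
      rw [hs]
      simp only
      rw [show ((0:ℝ) - ρ * (2 * a - b)) ^ 2 + 4 * ρ ^ 2 * a * (b - a) = (ρ * b) ^ 2 by ring]
      exact Real.sqrt_sq (by positivity)
    have h := hcont.tendsto 0
    rw [h0] at h
    exact h.mono_left nhdsWithin_le_nhds
  have hid0 : Tendsto (fun x : ℝ => x) (nhdsWithin 0 (Set.Ioi 0)) (nhds 0) :=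
    (continuous_id.tendsto 0).mono_left nhdsWithin_le_nhds
  have hxF20 : Tendsto (fun x : ℝ => (b * ρ + x + s x) / (2 * a))
      (nhdsWithin 0 (Set.Ioi 0)) (nhds (b * ρ / a)) := by
    have h : Tendsto (fun x : ℝ => (b * ρ + x + s x) / (2 * a))
        (nhdsWithin 0 (Set.Ioi 0)) (nhds ((b * ρ + 0 + ρ * b) / (2 * a))) :=
      ((tendsto_const_nhds.add hid0).add hscont).div_const (2 * a)
    rwa [show (b * ρ + 0 + ρ * b) / (2 * a) = b * ρ / a by
      rw [div_eq_div_iff h2a.ne' ha0.ne']; ring] at h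
  have hF2top0 : Tendsto F₂ (nhdsWithin 0 (Set.Ioi 0)) atTop := by
    have h := Filter.Tendsto.pos_mul_atTop (div_pos (mul_pos hb hρ) ha0) hxF20
      tendsto_inv_nhdsGT_zero
    refine h.congr fun x => ?_
    rw [hF₂, ← div_eq_mul_inv, div_div]
  have hratio3 : Tendsto (fun x : ℝ => (F₂ x - b) / (F₂ x - a))
      (nhdsWithin 0 (Set.Ioi 0)) (nhds 1) := by
    have h1 : Tendsto (fun x : ℝ => F₂ x - a) (nhdsWithin 0 (Set.Ioi 0)) atTop :=
      tendsto_atTop_add_const_right _ (-a) hF2top0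
    have h2 : Tendsto (fun x : ℝ => 1 + (a - b) / (F₂ x - a))
        (nhdsWithin 0 (Set.Ioi 0)) (nhds (1 + 0)) :=
      tendsto_const_nhds.add (tendsto_const_nhds.div_atTop h1)
    rw [add_zero] at h2
    refine h2.congr' ?_
    filter_upwards [h1.eventually_ge_atTop 1] with x hx
    have hne : F₂ x - a ≠ 0 := by linarith
    field_simp
    ring
  have ht3 : Tendsto (fun x : ℝ => x * f (1 / F₂ x)) (nhdsWithin 0 (Set.Ioi 0))
      (nhds (b * ρ ^ 2 / a)) := by
    have h := (hxF20.mul hratio3).const_mul ρ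
    rw [show ρ * (b * ρ / a * 1) = b * ρ ^ 2 / a by field_simp] at h
    refine h.congr' ?_
    filter_upwards [self_mem_nhdsWithin] with x hx
    have hx0 : 0 < x := hx
    rw [hfF (F₂ x) (hF2pos x hx0).ne', ← hxF2eq x hx0]
    ring
  have c3 : Tendsto (fun x : ℝ => x * S₂ x) (nhdsWithin 0 (Set.Ioi 0))
      (nhds (b * ρ ^ 2 / (a + b * ρ ^ 2))) := by
    have h := tendsto_div_one_add ht3 hL
    rw [e1] at h
    refine h.congr fun x => ?_
    rw [hS₂]
    simp only
    rw [mul_div_assoc]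
  refine ⟨c1, c2, c3, ?_⟩
  intro Q₀ Q₁ hQ0 hQ1 hrel
  rw [div_eq_div_iff ha0.ne' hQ0.ne'] at hrel
  rw [div_eq_div_iff habr.ne' (by positivity)]
  linear_combination hrel
end
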